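/- arXiv:math/9903062 — 2 statements merged into one kernel-verified Lean document; each statement's English description precedes it below -/
import Mathlib

section
/- Let κ be a nonempty finite index type, let ι be a nonempty index type, and let a : ι → κ → ℝ be a family of strictly positive real numbers. Let z : κ → ℂ be a nonzero vector satisfying ∑_{j ∈ κ} a i j · (z j)² = 0 for every i ∈ ι. Then the point of the complex projective space ℙ(κ → ℂ) determined by z is distinct from the point determined by the componentwise complex conjugate vector j ↦ conj(z j); equivalently, there is no complex scalar λ with conj(z j) = λ · z j for all j. -/
/-! If `z̄ = λ z`, then multiplying a quadric `∑ a_j z_j² = 0` by `λ` turns it into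
`∑ a_j |z_j|² = 0`, which forces `z = 0` when all `a_j > 0`. -/

open Complex ComplexConjugate

lemma eq_zero_of_sum_pos_mul_normSq_eq_zero {κ : Type*} [Fintype κ] {a : κ → ℝ}
    (ha : ∀ j, 0 < a j) {z : κ → ℂ} (h : ∑ j, a j * normSq (z j) = 0) : z = 0 := by
  have hterm := (Finset.sum_eq_zero_iff_of_nonneg fun j _ =>
    mul_nonneg (ha j).le (normSq_nonneg (z j))).mp h
  funext j
  have := hterm j (Finset.mem_univ j)
  exact normSq_eq_zero.mp ((mul_eq_zero.mp this).resolve_left (ha j).ne')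

lemma sum_mul_normSq_eq_mul_sum_mul_sq {κ : Type*} [Fintype κ] (a : κ → ℝ) {z : κ → ℂ} {l : ℂ}
    (hl : ∀ j, conj (z j) = l * z j) :
    ((∑ j, a j * normSq (z j) : ℝ) : ℂ) = l * ∑ j, (a j : ℂ) * z j ^ 2 := by
  push_cast
  rw [Finset.mul_sum]
  refine Finset.sum_congr rfl fun j _ => ?_
  rw [← mul_conj, hl j]
  ring

lemma not_exists_conj_eq_mul_of_sum_pos_mul_sq_eq_zero {κ : Type*} [Fintype κ] {a : κ → ℝ}
    (ha : ∀ j, 0 < a j) {z : κ → ℂ} (hz : z ≠ 0) (hquad : ∑ j, (a j : ℂ) * z j ^ 2 = 0) :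
    ¬ ∃ l : ℂ, ∀ j, conj (z j) = l * z j := by
  rintro ⟨l, hl⟩
  refine hz (eq_zero_of_sum_pos_mul_normSq_eq_zero ha ?_)
  have hsum := sum_mul_normSq_eq_mul_sum_mul_sq a hl
  rw [hquad, mul_zero] at hsum
  exact_mod_cast hsum

lemma Projectivization.exists_conj_eq_mul_of_mk_eq_mk_conj {κ : Type*} {z : κ → ℂ} (hz : z ≠ 0)
    (hz' : (fun j => conj (z j)) ≠ 0)
    (h : Projectivization.mk ℂ z hz = Projectivization.mk ℂ (fun j => conj (z j)) hz') :
    ∃ l : ℂ, ∀ j, conj (z j) = l * z j := by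
  obtain ⟨u, hu⟩ := (Projectivization.mk_eq_mk_iff' ℂ _ _ hz hz').mp h
  refine ⟨conj u, fun j => ?_⟩
  have hj := congrArg conj (congrFun hu j)
  simp only [Pi.smul_apply, smul_eq_mul, map_mul, conj_conj] at hj
  exact hj.symm

theorem stmt_0_general {κ ι : Type*} [Fintype κ] [Nonempty ι]
    (a : ι → κ → ℝ) (ha : ∀ i j, 0 < a i j)
    (z : κ → ℂ) (hz : z ≠ 0)
    (hquad : ∀ i, ∑ j, (a i j : ℂ) * (z j) ^ 2 = 0)
    (hz' : (fun j => (starRingEnd ℂ) (z j)) ≠ 0) :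
    Projectivization.mk ℂ z hz ≠
      Projectivization.mk ℂ (fun j => (starRingEnd ℂ) (z j)) hz' ∧
    ¬ ∃ l : ℂ, ∀ j, (starRingEnd ℂ) (z j) = l * z j := by
  let i : ι := Classical.arbitrary ι
  have hnot := not_exists_conj_eq_mul_of_sum_pos_mul_sq_eq_zero (ha i) hz (hquad i)
  exact ⟨fun h => hnot (Projectivization.exists_conj_eq_mul_of_mk_eq_mk_conj hz hz' h), hnot⟩

/-- The conjugation involution `σ([z]) = [z̄]` of complex projective space has no
fixed points on the intersection of quadrics `∑ j, a i j * (z j)^2 = 0` with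
strictly positive real coefficients `a i j`. -/
theorem stmt_0 {κ ι : Type*} [Fintype κ] [Nonempty κ] [Nonempty ι]
    (a : ι → κ → ℝ) (ha : ∀ i j, 0 < a i j)
    (z : κ → ℂ) (hz : z ≠ 0)
    (hquad : ∀ i, ∑ j, (a i j : ℂ) * (z j) ^ 2 = 0)
    (hz' : (fun j => (starRingEnd ℂ) (z j)) ≠ 0) :
    Projectivization.mk ℂ z hz ≠
      Projectivization.mk ℂ (fun j => (starRingEnd ℂ) (z j)) hz' ∧
    ¬ ∃ l : ℂ, ∀ j, (starRingEnd ℂ) (z j) = l * z j :=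
  stmt_0_general a ha z hz hquad hz'
end

section
/- Let q be a quaternion with ‖q‖ = 1 whose imaginary part is nonzero, and let v be a nonzero purely imaginary quaternion that is orthogonal (for the standard real inner product on ℍ) to the imaginary part im(q) of q. Then q·v·q⁻¹ ≠ v; that is, conjugation by q moves every nonzero imaginary vector orthogonal to the axis im(q). -/
/-!
For purely imaginary `a, b` the anticommutator `a * b + b * a` is the real number `-2 ⟪a, b⟫`,
so orthogonal imaginary quaternions anticommute. If `q` fixes `v` under conjugation then `q`,
hence also `im q`, commutes with `v`; together with anticommutation this gives `im q * v = 0`,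
impossible in a division ring.
-/

open scoped Quaternion RealInnerProductSpace

namespace Quaternion

theorem mul_add_mul_swap_of_re_eq_zero {a b : ℍ[ℝ]} (ha : a.re = 0) (hb : b.re = 0) :
    a * b + b * a = ((-2 * ⟪a, b⟫ : ℝ) : ℍ[ℝ]) := by
  rw [inner_def]
  ext <;> simp [ha, hb] <;> ring

theorem mul_eq_neg_mul_swap_of_inner_eq_zero {a b : ℍ[ℝ]} (ha : a.re = 0) (hb : b.re = 0)
    (hab : ⟪a, b⟫ = 0) : a * b = -(b * a) := by
  rw [eq_neg_iff_add_eq_zero, mul_add_mul_swap_of_re_eq_zero ha hb, hab]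
  simp

theorem eq_zero_or_eq_zero_of_commute_of_inner_eq_zero {a b : ℍ[ℝ]} (ha : a.re = 0)
    (hb : b.re = 0) (hab : ⟪a, b⟫ = 0) (hcomm : Commute a b) : a = 0 ∨ b = 0 := by
  have h : a * b = -(a * b) := hcomm.eq ▸ mul_eq_neg_mul_swap_of_inner_eq_zero ha hb hab
  have h2 : (2 : ℝ) • (a * b) = 0 := by rw [two_smul]; exact eq_neg_iff_add_eq_zero.mp h
  exact mul_eq_zero.mp ((smul_eq_zero.mp h2).resolve_left two_ne_zero)

theorem commute_im_left {a b : ℍ[ℝ]} (h : Commute a b) : Commute a.im b := by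
  rw [← add_sub_cancel_left (a.re : ℍ[ℝ]) a.im, re_add_im]
  exact h.sub_left (coe_commute a.re b)

end Quaternion

theorem stmt_4_general (q : ℍ[ℝ]) (hq' : q.im ≠ 0)
    (v : ℍ[ℝ]) (hv : v ≠ 0) (hv' : v.re = 0) (hperp : ⟪v, q.im⟫ = 0) :
    q * v * q⁻¹ ≠ v := by
  have hq : q ≠ 0 := fun h => hq' (by simp [h])
  intro hfix
  have hcomm : Commute q.im v :=
    Quaternion.commute_im_left ((mul_inv_eq_iff_eq_mul₀ hq).mp hfix)
  rw [real_inner_comm] at hperp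
  exact (Quaternion.eq_zero_or_eq_zero_of_commute_of_inner_eq_zero (Quaternion.re_im q) hv'
    hperp hcomm).elim hq' hv

/-- For a unit quaternion `q` with nonzero imaginary part, conjugation by `q`
moves every nonzero purely imaginary quaternion orthogonal to the axis `im q`. -/
theorem stmt_4 (q : ℍ[ℝ]) (hq : ‖q‖ = 1) (hq' : q.im ≠ 0)
    (v : ℍ[ℝ]) (hv : v ≠ 0) (hv' : v.re = 0) (hperp : ⟪v, q.im⟫ = 0) :
    q * v * q⁻¹ ≠ v :=
  stmt_4_general q hq' v hv hv' hperp
end
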